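/- Ward's linkage is average-reducible: for nonempty pairwise disjoint finite clusters A, B, C ⊆ ℝ^k with |C| ≥ |A| + |B|, we have d_Ward(A ∪ B, C) ≥ (d_Ward(A, C) + d_Ward(B, C))/2 - d_Ward(A, B). -/

import Mathlib

open scoped Classical

noncomputable def centroid {k : ℕ} (A : Finset (EuclideanSpace ℝ (Fin k))) :
    EuclideanSpace ℝ (Fin k) :=
  (A.card : ℝ)⁻¹ • ∑ a ∈ A, a

noncomputable def dWard {k : ℕ} (X Y : Finset (EuclideanSpace ℝ (Fin k))) : ℝ :=
  ((X.card : ℝ) * Y.card / (X.card + Y.card)) * ‖centroid X - centroid Y‖ ^ 2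

/-!
Ward's linkage satisfies the Lance–Williams recurrence
`(a + b + c) d(A ∪ B, C) = (a + c) d(A, C) + (b + c) d(B, C) - c d(A, B)`,
where `a, b, c` are the cluster sizes; it is the weighted identity
`‖a u + b v‖² + a b ‖u - v‖² = (a + b)(a ‖u‖² + b ‖v‖²)` applied to the centroids
`u = μ(A) - μ(C)`, `v = μ(B) - μ(C)`. Multiplying the claim by `a + b + c` and substituting,
it becomes
`((a + c - b)/2) d(A, C) + ((b + c - a)/2) d(B, C) + (a + b) d(A, B) ≥ 0`,
and all three coefficients are nonnegative once `c ≥ a + b`.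
-/

theorem norm_smul_add_smul_sq_add_mul_norm_sub_sq {E : Type*} [NormedAddCommGroup E]
    [InnerProductSpace ℝ E] (a b : ℝ) (u v : E) :
    ‖a • u + b • v‖ ^ 2 + a * b * ‖u - v‖ ^ 2 = (a + b) * (a * ‖u‖ ^ 2 + b * ‖v‖ ^ 2) := by
  rw [norm_add_sq_real, norm_sub_sq_real, norm_smul, norm_smul, real_inner_smul_left,
    real_inner_smul_right, mul_pow, mul_pow, Real.norm_eq_abs, Real.norm_eq_abs, sq_abs, sq_abs]
  ring

section Ward

variable {k : ℕ}

theorem card_smul_centroid (A : Finset (EuclideanSpace ℝ (Fin k))) :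
    (A.card : ℝ) • centroid A = ∑ a ∈ A, a := by
  rcases A.eq_empty_or_nonempty with rfl | hA
  · simp
  · exact smul_inv_smul₀ (Nat.cast_ne_zero.mpr hA.card_pos.ne') _

theorem card_smul_centroid_union {A B : Finset (EuclideanSpace ℝ (Fin k))}
    (hAB : Disjoint A B) :
    ((A.card : ℝ) + B.card) • centroid (A ∪ B) =
      (A.card : ℝ) • centroid A + (B.card : ℝ) • centroid B := by
  rw [← Nat.cast_add, ← Finset.card_union_of_disjoint hAB, card_smul_centroid,
    card_smul_centroid, card_smul_centroid, Finset.sum_union hAB]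

theorem dWard_nonneg (X Y : Finset (EuclideanSpace ℝ (Fin k))) : 0 ≤ dWard X Y := by
  unfold dWard
  positivity

theorem card_add_card_mul_dWard {X : Finset (EuclideanSpace ℝ (Fin k))} (hX : X.Nonempty)
    (Y : Finset (EuclideanSpace ℝ (Fin k))) :
    ((X.card : ℝ) + Y.card) * dWard X Y = X.card * Y.card * ‖centroid X - centroid Y‖ ^ 2 := by
  have : (0 : ℝ) < X.card + Y.card := by have := hX.card_pos; positivity
  unfold dWard
  field_simp

theorem dWard_union_lanceWilliams {A B : Finset (EuclideanSpace ℝ (Fin k))}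
    (hA : A.Nonempty) (hB : B.Nonempty) (hAB : Disjoint A B)
    (C : Finset (EuclideanSpace ℝ (Fin k))) :
    ((A.card : ℝ) + B.card + C.card) * dWard (A ∪ B) C =
      (A.card + C.card) * dWard A C + (B.card + C.card) * dWard B C - C.card * dWard A B := by
  have hUC := card_add_card_mul_dWard (hA.inl : (A ∪ B).Nonempty) C
  rw [Finset.card_union_of_disjoint hAB, Nat.cast_add] at hUC
  have hAC := card_add_card_mul_dWard hA C
  have hBC := card_add_card_mul_dWard hB C
  have hAB' := card_add_card_mul_dWard hA B
  set a : ℝ := (A.card : ℝ)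
  set b : ℝ := (B.card : ℝ)
  set c : ℝ := (C.card : ℝ)
  have hab : 0 < a + b := by have := hA.card_pos; positivity
  have hshift : (a + b) • (centroid (A ∪ B) - centroid C) =
      a • (centroid A - centroid C) + b • (centroid B - centroid C) := by
    rw [smul_sub, card_smul_centroid_union hAB]
    module
  have hweighted := norm_smul_add_smul_sq_add_mul_norm_sub_sq a b
    (centroid A - centroid C) (centroid B - centroid C)
  rw [← hshift, sub_sub_sub_cancel_right, norm_smul, mul_pow, Real.norm_eq_abs, sq_abs]
    at hweighted
  rw [hUC, hAC, hBC]
  refine mul_left_cancel₀ hab.ne' ?_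
  linear_combination c * hweighted + c * hAB'

end Ward

theorem ward_average_reducible_general {k : ℕ} (A B C : Finset (EuclideanSpace ℝ (Fin k)))
    (hA : A.Nonempty) (hB : B.Nonempty)
    (hAB : Disjoint A B)
    (hcard : A.card + B.card ≤ C.card) :
    dWard (A ∪ B) C ≥ (dWard A C + dWard B C) / 2 - dWard A B := by
  have hLW := dWard_union_lanceWilliams hA hB hAB C
  have hcard' : (A.card : ℝ) + B.card ≤ C.card := by exact_mod_cast hcard
  have hn : (0 : ℝ) < A.card + B.card + C.card := by have := hA.card_pos; positivity
  refine le_of_mul_le_mul_left ?_ hn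
  rw [hLW]
  linarith [mul_nonneg (by linarith : (0 : ℝ) ≤ A.card + C.card - B.card) (dWard_nonneg A C),
    mul_nonneg (by linarith : (0 : ℝ) ≤ B.card + C.card - A.card) (dWard_nonneg B C),
    mul_nonneg (by positivity : (0 : ℝ) ≤ A.card + B.card) (dWard_nonneg A B)]

theorem ward_average_reducible {k : ℕ} (A B C : Finset (EuclideanSpace ℝ (Fin k)))
    (hA : A.Nonempty) (hB : B.Nonempty) (hC : C.Nonempty)
    (hAB : Disjoint A B) (hAC : Disjoint A C) (hBC : Disjoint B C)
    (hcard : A.card + B.card ≤ C.card) :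
    dWard (A ∪ B) C ≥ (dWard A C + dWard B C) / 2 - dWard A B :=
  ward_average_reducible_general A B C hA hB hAB hcard
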